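/- Let p be an odd prime, m ≥ 2 even, and ψ a primitive additive character mod p^m. Then |Σ_{x ∈ ℤ/p^mℤ} ψ(x²)| = p^{m/2}. -/

import Mathlib

/-- An additive character mod `p^m` is primitive if it is not induced by a
character mod `p^n` for any `n < m`. -/
def AddPrimitive (p m : ℕ) (ψ : AddChar (ZMod (p ^ m)) ℂ) : Prop :=
  ∀ n : ℕ, ∀ hn : n < m, ∀ ψ₁ : AddChar (ZMod (p ^ n)) ℂ,
    ∃ a : ZMod (p ^ m), ψ a ≠ ψ₁ (ZMod.castHom (pow_dvd_pow p hn.le) (ZMod (p ^ n)) a)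

lemma addPrimitive_isPrimitive (p m : ℕ) [hp : Fact p.Prime] (hm : 1 ≤ m)
    (ψ : AddChar (ZMod (p ^ m)) ℂ) (hψ : AddPrimitive p m ψ) : ψ.IsPrimitive := by
  haveI : NeZero (p ^ m) := ⟨pow_ne_zero _ hp.out.ne_zero⟩
  by_contra h
  obtain ⟨d, hd, hdlt, hd1⟩ := AddChar.exists_divisor_of_not_isPrimitive ψ h
  obtain ⟨k, hk, rfl⟩ := (Nat.dvd_prime_pow hp.out).mp hd
  have hkm : k < m := by
    by_contra hkm
    exact absurd (Nat.pow_le_pow_right hp.out.one_lt.le (le_of_not_gt hkm)) (not_le.mpr hdlt)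
  have hdvd' : p ^ k ∣ p ^ (m - 1) := pow_dvd_pow p (by omega)
  -- ψ kills all multiples of p^(m-1)
  have hker : ∀ x : ZMod (p ^ m), ψ (((p ^ (m - 1) : ℕ) : ZMod (p ^ m)) * x) = 1 := by
    intro x
    obtain ⟨c, hc⟩ := hdvd'
    have : ((p ^ (m - 1) : ℕ) : ZMod (p ^ m)) * x = ((c : ZMod (p ^ m)) * x) * (p ^ k : ℕ) := by
      push_cast [hc]; ring
    rw [this]
    have := congrFun (congrArg (fun f : AddChar (ZMod (p ^ m)) ℂ => (f : ZMod (p ^ m) → ℂ)) hd1)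
      ((c : ZMod (p ^ m)) * x)
    simpa [AddChar.mulShift_apply, mul_comm] using this
  have hdvd : p ^ (m - 1) ∣ p ^ m := pow_dvd_pow p (by omega)
  haveI : NeZero (p ^ (m - 1)) := ⟨pow_ne_zero _ hp.out.ne_zero⟩
  -- ψ factors through the congruence mod p^(m-1)
  have hcong : ∀ u v : ZMod (p ^ m),
      ZMod.castHom hdvd (ZMod (p ^ (m - 1))) u = ZMod.castHom hdvd (ZMod (p ^ (m - 1))) v →
      ψ u = ψ v := by
    intro u v huv
    have h0 : ZMod.castHom hdvd (ZMod (p ^ (m - 1))) (u - v) = 0 := by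
      rw [map_sub, huv, sub_self]
    have h0' : (((u - v).val : ℕ) : ZMod (p ^ (m - 1))) = 0 := by
      rwa [ZMod.natCast_val, ← ZMod.castHom_apply (h := hdvd)]
    obtain ⟨t, ht⟩ := (ZMod.natCast_eq_zero_iff _ _).mp h0'
    have huvm : u - v = ((p ^ (m - 1) : ℕ) : ZMod (p ^ m)) * (t : ℕ) := by
      have := ZMod.natCast_rightInverse (n := p ^ m) (u - v)
      rw [← this, ht]; push_cast; ring
    have : ψ u = ψ (v + (u - v)) := by ring_nf
    rw [this, AddChar.map_add_eq_mul, huvm, hker, mul_one]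
  have hback : ∀ x : ZMod (p ^ (m - 1)),
      ZMod.castHom hdvd (ZMod (p ^ (m - 1))) ((x.val : ZMod (p ^ m))) = x := by
    intro x
    rw [map_natCast]
    exact ZMod.natCast_rightInverse x
  -- build the induced character mod p^(m-1)
  set ψ₁ : AddChar (ZMod (p ^ (m - 1))) ℂ :=
    { toFun := fun b => ψ ((b.val : ZMod (p ^ m)))
      map_zero_eq_one' := by simp
      map_add_eq_mul' := by
        intro a b
        show ψ (((a + b).val : ZMod (p ^ m))) = ψ ((a.val : ZMod (p ^ m))) * ψ ((b.val : ZMod (p ^ m)))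
        rw [← AddChar.map_add_eq_mul]
        apply hcong
        rw [map_add, hback, hback, hback] } with hψ₁
  obtain ⟨a, hne⟩ := hψ (m - 1) (by omega) ψ₁
  apply hne
  have : ψ₁ (ZMod.castHom (pow_dvd_pow p (by omega : m - 1 ≤ m)) (ZMod (p ^ (m - 1))) a)
      = ψ (((ZMod.castHom hdvd (ZMod (p ^ (m - 1))) a).val : ZMod (p ^ m))) := rfl
  rw [this]
  apply hcong
  rw [hback]

/-- for `m ≥ 2` even and `ψ` a primitive additive character mod `p^m`,
the quadratic Gauss sum has absolute value `p^(m/2)`. -/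
theorem abs_quadratic_gauss_sum_even
    (p m : ℕ) [Fact p.Prime] (hodd : p ≠ 2) (hm : 2 ≤ m) (hmeven : Even m)
    (ψ : AddChar (ZMod (p ^ m)) ℂ) (hψ : AddPrimitive p m ψ) :
    ‖∑ x : ZMod (p ^ m), ψ (x ^ 2)‖ = (p : ℝ) ^ (m / 2) := by
  have hp : Fact p.Prime := inferInstance
  haveI : NeZero (p ^ m) := ⟨pow_ne_zero _ hp.out.ne_zero⟩
  have hprim : ψ.IsPrimitive := addPrimitive_isPrimitive p m (by omega) ψ hψ
  set S : ℂ := ∑ x : ZMod (p ^ m), ψ (x ^ 2) with hS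
  have hchar : 0 < ringChar (ZMod (p ^ m)) := by
    rw [ZMod.ringChar_zmod_n]
    exact pow_pos hp.out.pos m
  have h2 : IsUnit (-2 : ZMod (p ^ m)) := by
    apply IsUnit.neg
    have : ((2 : ℕ) : ZMod (p ^ m)) = (2 : ZMod (p ^ m)) := by norm_num
    rw [← this, ZMod.isUnit_iff_coprime]
    exact Nat.Coprime.pow_right _ ((Nat.Prime.coprime_iff_not_dvd Nat.prime_two).mpr
      (fun hdvd => hodd ((Nat.prime_dvd_prime_iff_eq Nat.prime_two hp.out).mp hdvd).symm))
  have key : S * (starRingEnd ℂ) S = ((p : ℂ)) ^ m := by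
    classical
    have hconj : (starRingEnd ℂ) S = ∑ y : ZMod (p ^ m), ψ (-(y ^ 2)) := by
      rw [hS, map_sum]
      refine Finset.sum_congr rfl fun y _ => ?_
      rw [AddChar.starComp_apply hchar, AddChar.inv_apply]
    rw [hconj, hS, Finset.sum_mul_sum]
    have step1 : ∀ x : ZMod (p ^ m), ∑ y : ZMod (p ^ m), ψ (x ^ 2) * ψ (-(y ^ 2))
        = ∑ h : ZMod (p ^ m), ψ (-(h ^ 2)) * ψ (x * (-2 * h)) := by
      intro x
      rw [← Equiv.sum_comp (Equiv.addLeft x) (fun y => ψ (x ^ 2) * ψ (-(y ^ 2)))]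
      refine Finset.sum_congr rfl fun h _ => ?_
      rw [← AddChar.map_add_eq_mul, ← AddChar.map_add_eq_mul]
      congr 1
      show x ^ 2 + -((x + h) ^ 2) = -(h ^ 2) + x * (-2 * h)
      ring
    calc ∑ x : ZMod (p ^ m), ∑ y : ZMod (p ^ m), ψ (x ^ 2) * ψ (-(y ^ 2))
        = ∑ x : ZMod (p ^ m), ∑ h : ZMod (p ^ m), ψ (-(h ^ 2)) * ψ (x * (-2 * h)) := by
          exact Finset.sum_congr rfl fun x _ => step1 x
      _ = ∑ h : ZMod (p ^ m), ψ (-(h ^ 2)) * ∑ x : ZMod (p ^ m), ψ (x * (-2 * h)) := by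
          rw [Finset.sum_comm]
          exact Finset.sum_congr rfl fun h _ => by rw [Finset.mul_sum]
      _ = ∑ h : ZMod (p ^ m), ψ (-(h ^ 2)) *
            (((if -2 * h = 0 then Fintype.card (ZMod (p ^ m)) else 0 : ℕ) : ℂ)) := by
          exact Finset.sum_congr rfl fun h _ => by rw [AddChar.sum_mulShift _ hprim]
      _ = ((p : ℂ)) ^ m := by
          rw [Finset.sum_eq_single 0]
          · norm_num [ZMod.card]
          · intro b _ hb
            have hbz : -2 * b ≠ 0 := fun hz => hb (h2.mul_right_eq_zero.mp hz)
            rw [if_neg hbz]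
            simp
          · simp
  have hnormSq : Complex.normSq S = (p : ℝ) ^ m := by
    have := Complex.mul_conj S
    rw [key] at this
    have h2 : ((Complex.normSq S : ℝ) : ℂ) = (((p : ℝ) ^ m : ℝ) : ℂ) := by
      rw [← this]; push_cast; ring
    exact_mod_cast h2
  obtain ⟨k, hk⟩ := hmeven
  have hmk : m / 2 = k := by omega
  rw [Complex.norm_def, hnormSq, hmk]
  have : (p : ℝ) ^ m = ((p : ℝ) ^ k) ^ 2 := by rw [← pow_mul]; congr 1; omega
  rw [this, Real.sqrt_sq (by positivity)]
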